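/- arXiv:math/0509064 — 2 statements merged into one kernel-verified Lean document; each statement's English description precedes it below -/
import Mathlib

section
/- Let X and Y be normed linear spaces with Y ⊆ X and Y dense in X with respect to the X-norm, let f : ℝ^N → X be continuous, and let ρ : ℝ^N → (0, ∞) be continuous. Then there exists a continuous map ĝ : ℝ^N → Y such that ‖f(η) − ĝ(η)‖_X < ρ(η) for all η ∈ ℝ^N. -/
/-- Lemma 4.2 (B): dense-image approximation with a variable continuous error
tolerance ρ(η). -/
theorem stmt_4 {N : ℕ} (X Y : Type*)
    [NormedAddCommGroup X] [NormedSpace ℝ X]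
    [NormedAddCommGroup Y] [NormedSpace ℝ Y]
    (ι : Y →ₗ[ℝ] X) (hinj : Function.Injective ι) (hdense : DenseRange ι)
    (f : EuclideanSpace ℝ (Fin N) → X) (hf : Continuous f)
    (ρ : EuclideanSpace ℝ (Fin N) → ℝ) (hρcont : Continuous ρ)
    (hρpos : ∀ η, 0 < ρ η) :
    ∃ g : EuclideanSpace ℝ (Fin N) → Y, Continuous g ∧
      ∀ η, ‖f η - ι (g η)‖ < ρ η := by
  have hconv : ∀ η, Convex ℝ {y : Y | ‖f η - ι y‖ < ρ η} := by
    intro η y₁ h₁ y₂ h₂ a b ha hb hab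
    simp only [Set.mem_setOf_eq] at *
    have : f η - ι (a • y₁ + b • y₂) = a • (f η - ι y₁) + b • (f η - ι y₂) := by
      rw [map_add, map_smul, map_smul]
      have h1 : f η = a • f η + b • f η := by rw [← add_smul, hab, one_smul]
      nth_rw 1 [h1]
      module
    rw [this]
    calc ‖a • (f η - ι y₁) + b • (f η - ι y₂)‖
        ≤ a * ‖f η - ι y₁‖ + b * ‖f η - ι y₂‖ := by
          refine (norm_add_le _ _).trans ?_
          rw [norm_smul, norm_smul, Real.norm_of_nonneg ha, Real.norm_of_nonneg hb]
      _ < a * ρ η + b * ρ η := by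
          rcases ha.lt_or_eq with ha' | ha'
          · rcases hb.lt_or_eq with hb' | hb'
            · exact add_lt_add (by nlinarith) (by nlinarith)
            · have : a = 1 := by linarith
              simp [← hb', this]
              nlinarith
          · have : b = 1 := by linarith
            simp [← ha', this]
            nlinarith
      _ = ρ η := by rw [← add_mul, hab, one_mul]
  have hloc : ∀ η, ∃ c : Y, ∀ᶠ ζ in nhds η, c ∈ {y : Y | ‖f ζ - ι y‖ < ρ ζ} := by
    intro η
    obtain ⟨c, hc⟩ := Metric.denseRange_iff.mp hdense (f η) (ρ η / 2) (half_pos (hρpos η))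
    refine ⟨c, ?_⟩
    have hcont : Continuous fun ζ => ρ ζ - ‖f ζ - ι c‖ :=
      hρcont.sub ((hf.sub continuous_const).norm)
    have hopen : IsOpen {ζ | 0 < ρ ζ - ‖f ζ - ι c‖} := isOpen_lt continuous_const hcont
    have hη : η ∈ {ζ | 0 < ρ ζ - ‖f ζ - ι c‖} := by
      simp only [Set.mem_setOf_eq, sub_pos]
      rw [dist_eq_norm] at hc
      calc ‖f η - ι c‖ < ρ η / 2 := hc
        _ < ρ η := half_lt_self (hρpos η)
    filter_upwards [hopen.mem_nhds hη] with ζ hζ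
    simpa [sub_pos] using hζ
  obtain ⟨g, hg⟩ := exists_continuous_forall_mem_convex_of_local_const hconv hloc
  exact ⟨g, g.continuous, hg⟩
end

section
/- The system ẋ₁ = g(x₂), ẋ₂ = u on [0,T], with g(y) = 0 for y ≤ 2 and g(y) = (y−2)² sin(y−2) for y > 2, is not globally feedback equivalent to the double integrator ż₁ = z₂, ż₂ = v. More precisely, there do not exist C¹ functions φ₁(t,x₁,x₂), φ₂(t,x₁,x₂), φ₃(t,x₁,x₂,u) such that for each t the maps (x₁,x₂) ↦ (φ₁,φ₂) and (x₁,x₂,u) ↦ (φ₁,φ₂,φ₃) are diffeomorphisms of ℝ² onto ℝ² and of ℝ³ onto ℝ³, and such that the transformation z_i(t) = φ_i(t,x₁(t),x₂(t)), v(t) = φ₃(t,x₁(t),x₂(t),u(t)) carries trajectories of the first system to trajectories of the double integrator and conversely. -/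
/-- The singular nonlinearity of Example 1.1. -/
noncomputable def exG (y : ℝ) : ℝ :=
  if y ≤ 2 then 0 else (y - 2) ^ 2 * Real.sin (y - 2)

/-- A trajectory of the triangular system ẋ₁ = g(x₂), ẋ₂ = u on [0,T]. -/
def IsTrajSys (T : ℝ) (x₁ x₂ u : ℝ → ℝ) : Prop :=
  ∀ t ∈ Set.Icc (0 : ℝ) T,
    HasDerivAt x₁ (exG (x₂ t)) t ∧ HasDerivAt x₂ (u t) t

/-- A trajectory of the double integrator ż₁ = z₂, ż₂ = v on [0,T]. -/
def IsTrajCan (T : ℝ) (z₁ z₂ v : ℝ → ℝ) : Prop :=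
  ∀ t ∈ Set.Icc (0 : ℝ) T,
    HasDerivAt z₁ (z₂ t) t ∧ HasDerivAt z₂ (v t) t

/-!
Along a straight trajectory `x₁ ≡ a`, `x₂(s) = b + c (s - t)` that stays in the flat region
`x₂ ≤ 2`, the transformed trajectory satisfies `ż₁ = z₂`, so the derivative of `φ₁` at `(t, a, b)`
in the direction `(1, 0, c)` is `φ₂ t (a, b)` whatever the slope `c`. Hence `∂φ₁/∂x₂` vanishes for
`x₂ ≤ 1`, and `φ₁ t (a, 1) = φ₁ t (a, 0)` for all `t`. Differentiating in `t` along the constant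
trajectories then gives `φ₂ t (a, 1) = φ₂ t (a, 0)`, so the state transformation is not injective.
-/

open Set

lemma exG_of_le {y : ℝ} (hy : y ≤ 2) : exG y = 0 := if_pos hy

lemma isTrajSys_affine {T : ℝ} (a b c t : ℝ) (h : ∀ s ∈ Icc 0 T, b + c * (s - t) ≤ 2) :
    IsTrajSys T (fun _ => a) (fun s => b + c * (s - t)) (fun _ => c) := by
  intro s hs
  rw [exG_of_le (h s hs)]
  refine ⟨hasDerivAt_const s a, ?_⟩
  simpa using (((hasDerivAt_id s).sub_const t).const_mul c).const_add b

lemma hasDerivAt_comp_affine {f : ℝ × ℝ × ℝ → ℝ} {t a b : ℝ}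
    (hf : DifferentiableAt ℝ f (t, a, b)) (c : ℝ) :
    HasDerivAt (fun s => f (s, a, b + c * (s - t))) (fderiv ℝ f (t, a, b) (1, 0, c)) t := by
  have hγ : HasDerivAt (fun s : ℝ => (s, a, b + c * (s - t))) (1, 0, c) t := by
    refine (hasDerivAt_id t).prodMk ((hasDerivAt_const t a).prodMk ?_)
    simpa using (((hasDerivAt_id t).sub_const t).const_mul c).const_add b
  have hf' : HasFDerivAt f (fderiv ℝ f (t, a, b)) (t, a, b + c * (t - t)) := by
    simpa using hf.hasFDerivAt
  exact hf'.comp_hasDerivAt t hγ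

lemma hasDerivAt_comp_vertical {f : ℝ × ℝ × ℝ → ℝ} {t a b : ℝ}
    (hf : DifferentiableAt ℝ f (t, a, b)) :
    HasDerivAt (fun y => f (t, a, y)) (fderiv ℝ f (t, a, b) (0, 0, 1)) b :=
  hf.hasFDerivAt.comp_hasDerivAt b
    ((hasDerivAt_const b t).prodMk ((hasDerivAt_const b a).prodMk (hasDerivAt_id b)))

def MapsTrajectories (T : ℝ) (φ₁ φ₂ : ℝ → ℝ × ℝ → ℝ) (φ₃ : ℝ → ℝ × ℝ × ℝ → ℝ) : Prop :=
  ∀ x₁ x₂ u : ℝ → ℝ, IsTrajSys T x₁ x₂ u →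
    IsTrajCan T (fun t => φ₁ t (x₁ t, x₂ t)) (fun t => φ₂ t (x₁ t, x₂ t))
      (fun t => φ₃ t (x₁ t, x₂ t, u t))

namespace MapsTrajectories

variable {T : ℝ} {φ₁ φ₂ : ℝ → ℝ × ℝ → ℝ} {φ₃ : ℝ → ℝ × ℝ × ℝ → ℝ}

lemma hasDerivAt_along_affine (hφ : MapsTrajectories T φ₁ φ₂ φ₃) {t a b c : ℝ}
    (ht : t ∈ Icc 0 T) (h : ∀ s ∈ Icc 0 T, b + c * (s - t) ≤ 2) :
    HasDerivAt (fun s => φ₁ s (a, b + c * (s - t))) (φ₂ t (a, b)) t := by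
  simpa using (hφ _ _ _ (isTrajSys_affine a b c t h) t ht).1

lemma hasDerivAt_const_state (hφ : MapsTrajectories T φ₁ φ₂ φ₃) {t a b : ℝ} (ht : t ∈ Icc 0 T)
    (hb : b ≤ 2) :
    HasDerivAt (fun s => φ₁ s (a, b)) (φ₂ t (a, b)) t := by
  simpa using hφ.hasDerivAt_along_affine (a := a) (b := b) (c := 0) ht fun _ _ => by
    simpa using hb

lemma fderiv_along_affine_eq (hφ : MapsTrajectories T φ₁ φ₂ φ₃)
    (hφ₁ : Differentiable ℝ (fun p : ℝ × ℝ × ℝ => φ₁ p.1 p.2)) {t a b c : ℝ} (ht : t ∈ Icc 0 T)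
    (h : ∀ s ∈ Icc 0 T, b + c * (s - t) ≤ 2) :
    fderiv ℝ (fun p : ℝ × ℝ × ℝ => φ₁ p.1 p.2) (t, a, b) (1, 0, c) = φ₂ t (a, b) :=
  (hasDerivAt_comp_affine (hφ₁ _) c).unique (hφ.hasDerivAt_along_affine ht h)

lemma fderiv_apply_vertical_eq_zero (hφ : MapsTrajectories T φ₁ φ₂ φ₃) (hT : 0 < T)
    (hφ₁ : Differentiable ℝ (fun p : ℝ × ℝ × ℝ => φ₁ p.1 p.2)) {t a b : ℝ} (ht : t ∈ Icc 0 T)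
    (hb : b ≤ 1) :
    fderiv ℝ (fun p : ℝ × ℝ × ℝ => φ₁ p.1 p.2) (t, a, b) (0, 0, 1) = 0 := by
  have hflat := hφ.fderiv_along_affine_eq hφ₁ (a := a) (b := b) (c := 0) ht fun _ _ => by linarith
  have hsloped := hφ.fderiv_along_affine_eq hφ₁ (a := a) (b := b) (c := 1 / T) ht fun s hs => by
    have : 1 / T * (s - t) ≤ 1 := by
      rw [div_mul_eq_mul_div, one_mul]
      exact div_le_one_of_le₀ (by linarith [hs.2, ht.1]) hT.le
    linarith
  have hdir : ((1 : ℝ), (0 : ℝ), 1 / T) = (1, 0, 0) + (1 / T) • (0, 0, 1) := by simp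
  rw [hdir, map_add, map_smul, hflat, smul_eq_mul, add_eq_left] at hsloped
  exact (mul_eq_zero.mp hsloped).resolve_left (by positivity)

lemma apply_eq_apply_zero (hφ : MapsTrajectories T φ₁ φ₂ φ₃) (hT : 0 < T)
    (hφ₁ : Differentiable ℝ (fun p : ℝ × ℝ × ℝ => φ₁ p.1 p.2)) {t : ℝ} (ht : t ∈ Icc 0 T)
    (a : ℝ) {y : ℝ} (hy : y ∈ Icc 0 1) :
    φ₁ t (a, y) = φ₁ t (a, 0) := by
  refine constant_of_has_deriv_right_zero (f := fun y => φ₁ t (a, y)) ?_ (fun b hb => ?_) y hy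
  · have hline : Differentiable ℝ fun y : ℝ => (t, a, y) := by fun_prop
    exact (hφ₁.comp hline).continuous.continuousOn
  · have := hasDerivAt_comp_vertical (hφ₁ (t, a, b))
    rw [hφ.fderiv_apply_vertical_eq_zero hT hφ₁ ht hb.2.le] at this
    exact this.hasDerivWithinAt

lemma stateMap_apply_one_eq_apply_zero (hφ : MapsTrajectories T φ₁ φ₂ φ₃) (hT : 0 < T)
    (hφ₁ : Differentiable ℝ (fun p : ℝ × ℝ × ℝ => φ₁ p.1 p.2)) {t : ℝ} (ht : t ∈ Ioo 0 T)
    (a : ℝ) :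
    (φ₁ t (a, 1), φ₂ t (a, 1)) = (φ₁ t (a, 0), φ₂ t (a, 0)) := by
  have hEq : ∀ s ∈ Icc 0 T, φ₁ s (a, 1) = φ₁ s (a, 0) := fun s hs =>
    hφ.apply_eq_apply_zero hT hφ₁ hs a ⟨zero_le_one, le_rfl⟩
  have hderiv₁ := hφ.hasDerivAt_const_state (a := a) (Ioo_subset_Icc_self ht) one_le_two
  have hderiv₀ := hφ.hasDerivAt_const_state (a := a) (Ioo_subset_Icc_self ht) zero_le_two
  have hderiv₀' := hderiv₀.congr_of_eventuallyEq
    (Filter.eventually_of_mem (Icc_mem_nhds ht.1 ht.2) hEq)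
  rw [hEq t (Ioo_subset_Icc_self ht), hderiv₁.unique hderiv₀']

end MapsTrajectories

/-- Example 1.1: the system ẋ₁ = g(x₂), ẋ₂ = u on [0,T] is not globally feedback
equivalent to the double integrator: there are no C¹ functions φ₁, φ₂, φ₃ such
that for each t the state transformation and the state-control transformation
are global diffeomorphisms (of ℝ² and ℝ³ respectively) carrying trajectories of
the system to trajectories of the double integrator and conversely. -/
theorem stmt_11 (T : ℝ) (hT : 0 < T) :
    ¬ ∃ (φ₁ φ₂ : ℝ → ℝ × ℝ → ℝ) (φ₃ : ℝ → ℝ × ℝ × ℝ → ℝ),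
      -- C¹ regularity of the transformations
      ContDiff ℝ 1 (fun p : ℝ × (ℝ × ℝ) => φ₁ p.1 p.2) ∧
      ContDiff ℝ 1 (fun p : ℝ × (ℝ × ℝ) => φ₂ p.1 p.2) ∧
      ContDiff ℝ 1 (fun p : ℝ × (ℝ × ℝ × ℝ) => φ₃ p.1 p.2) ∧
      -- (A) for each t the maps are diffeomorphisms of ℝ² onto ℝ² and ℝ³ onto ℝ³
      (∀ t ∈ Set.Icc (0 : ℝ) T,
        Function.Bijective (fun x : ℝ × ℝ => (φ₁ t x, φ₂ t x)) ∧
        ContDiff ℝ 1 (Function.invFun (fun x : ℝ × ℝ => (φ₁ t x, φ₂ t x)))) ∧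
      (∀ t ∈ Set.Icc (0 : ℝ) T,
        Function.Bijective
          (fun p : ℝ × ℝ × ℝ => (φ₁ t (p.1, p.2.1), φ₂ t (p.1, p.2.1), φ₃ t p)) ∧
        ContDiff ℝ 1 (Function.invFun
          (fun p : ℝ × ℝ × ℝ => (φ₁ t (p.1, p.2.1), φ₂ t (p.1, p.2.1), φ₃ t p)))) ∧
      -- (B) trajectories are carried to trajectories, in both directions
      (∀ x₁ x₂ u : ℝ → ℝ, IsTrajSys T x₁ x₂ u →
        IsTrajCan T (fun t => φ₁ t (x₁ t, x₂ t)) (fun t => φ₂ t (x₁ t, x₂ t))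
          (fun t => φ₃ t (x₁ t, x₂ t, u t))) ∧
      (∀ z₁ z₂ v x₁ x₂ u : ℝ → ℝ, IsTrajCan T z₁ z₂ v →
        (∀ t ∈ Set.Icc (0 : ℝ) T,
          z₁ t = φ₁ t (x₁ t, x₂ t) ∧ z₂ t = φ₂ t (x₁ t, x₂ t) ∧
          v t = φ₃ t (x₁ t, x₂ t, u t)) →
        IsTrajSys T x₁ x₂ u) := by
  rintro ⟨φ₁, φ₂, φ₃, hφ₁, -, -, hstate, -, hφ, -⟩
  have ht : T / 2 ∈ Ioo 0 T := ⟨by positivity, by linarith⟩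
  have hsame := MapsTrajectories.stateMap_apply_one_eq_apply_zero hφ hT
    (hφ₁.differentiable one_ne_zero) ht 0
  have hone_eq_zero := (hstate (T / 2) (Ioo_subset_Icc_self ht)).1.1 hsame
  simp [Prod.ext_iff] at hone_eq_zero
end
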